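/- arXiv:2211.01422 — 4 statements merged into one kernel-verified Lean document; each statement's English description precedes it below -/
import Mathlib

section
/- Let a : ℕ → 𝒜 be a sequence with values in a finite alphabet, and k ≥ 2, η > 0 constants such that for every n₁ ≥ 0 there is a set U ⊆ {0,…,k^{n₁}−1} with |U| ≥ k^{n₁} − k^{n₁(1−η)} and a(n) = a(u) whenever u ∈ U and n ≡ u (mod k^{n₁}). Then for every letter α ∈ 𝒜 the limit ϑ_α = lim_{N→∞} (1/N)·#{n < N : a(n) = α} exists, and moreover (1/k^{n₁})·#{u < k^{n₁} : a(u) = α} = ϑ_α + O(k^{−η n₁}). -/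
open Finset

-- splitting a range count into blocks
lemma count_mul_blocks (p : ℕ → Prop) [DecidablePred p] (K M : ℕ) :
    ((range (M * K)).filter p).card
      = ∑ j ∈ range M, ((range K).filter (fun r => p (j * K + r))).card := by
  induction M with
  | zero => simp
  | succ M ih =>
    rw [Finset.sum_range_succ, ← ih, Nat.succ_mul]
    simp only [Finset.card_filter]
    rw [Finset.sum_range_add]

lemma count_le_add (p : ℕ → Prop) [DecidablePred p] (x y : ℕ) :
    ((range (x + y)).filter p).card ≤ ((range x).filter p).card + y := by
  simp only [Finset.card_filter]
  rw [Finset.sum_range_add]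
  have h1 : (∑ i ∈ range y, if p (x + i) then 1 else 0) ≤ ∑ _i ∈ range y, 1 :=
    Finset.sum_le_sum (fun i _ => by split <;> omega)
  have h2 : (∑ i ∈ range y, if p (x + i) then 1 else 0) ≤ y := by simpa using h1
  omega

lemma block_bound {A : Type*} [DecidableEq A] (a : ℕ → A) (α : A) (K : ℕ) (U : Finset ℕ)
    (hU : U ⊆ range K) (hsyn : ∀ u ∈ U, ∀ n, n % K = u → a n = a u) (j : ℕ) :
    (U.filter (fun r => a r = α)).card ≤ ((range K).filter (fun r => a (j * K + r) = α)).card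
    ∧ ((range K).filter (fun r => a (j * K + r) = α)).card
        ≤ (U.filter (fun r => a r = α)).card + (K - U.card) := by
  have hmod : ∀ r ∈ U, (j * K + r) % K = r := by
    intro r hr
    have hrK : r < K := Finset.mem_range.1 (hU hr)
    rw [Nat.add_comm, Nat.add_mul_mod_self_right, Nat.mod_eq_of_lt hrK]
  constructor
  · apply Finset.card_le_card
    intro r hr
    simp only [Finset.mem_filter] at hr ⊢
    refine ⟨hU hr.1, ?_⟩
    rw [hsyn r hr.1 _ (hmod r hr.1), hr.2]
  · calc ((range K).filter (fun r => a (j * K + r) = α)).card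
        ≤ ((U.filter (fun r => a r = α)) ∪ (range K \ U)).card := by
          apply Finset.card_le_card
          intro r hr
          simp only [Finset.mem_filter, Finset.mem_range] at hr
          by_cases hrU : r ∈ U
          · apply Finset.mem_union_left
            simp only [Finset.mem_filter]
            exact ⟨hrU, by rw [← hsyn r hrU _ (hmod r hrU), hr.2]⟩
          · exact Finset.mem_union_right _ (Finset.mem_sdiff.2 ⟨Finset.mem_range.2 hr.1, hrU⟩)
      _ ≤ (U.filter (fun r => a r = α)).card + (range K \ U).card := Finset.card_union_le _ _
      _ = (U.filter (fun r => a r = α)).card + (K - U.card) := by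
          rw [Finset.card_sdiff_of_subset hU, Finset.card_range]

lemma count_est {A : Type*} [DecidableEq A] (a : ℕ → A) (α : A) (K : ℕ) (U : Finset ℕ)
    (hU : U ⊆ range K) (hsyn : ∀ u ∈ U, ∀ n, n % K = u → a n = a u) (M : ℕ) :
    |(((range (M * K)).filter (fun n => a n = α)).card : ℝ)
        - M * (((range K).filter (fun n => a n = α)).card : ℝ)|
      ≤ M * ((K : ℝ) - U.card) := by
  have hUK : U.card ≤ K := by
    simpa using Finset.card_le_card hU
  have hE : ((K - U.card : ℕ) : ℝ) = (K : ℝ) - U.card := by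
    push_cast [Nat.cast_sub hUK]; ring
  have hcK : (((range K).filter (fun n => a n = α)).card : ℕ)
      = ((range K).filter (fun r => a (0 * K + r) = α)).card := by
    simp
  have hblock : ∀ j, |(((range K).filter (fun r => a (j * K + r) = α)).card : ℝ)
      - (((range K).filter (fun n => a n = α)).card : ℝ)| ≤ (K : ℝ) - U.card := by
    intro j
    obtain ⟨h1, h2⟩ := block_bound a α K U hU hsyn j
    obtain ⟨h3, h4⟩ := block_bound a α K U hU hsyn 0
    rw [← hcK] at h3 h4
    rw [abs_sub_le_iff]
    constructor
    · have := (Nat.cast_le (α := ℝ)).2 h2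
      have := (Nat.cast_le (α := ℝ)).2 h3
      push_cast [hE] at *
      linarith
    · have := (Nat.cast_le (α := ℝ)).2 h4
      have := (Nat.cast_le (α := ℝ)).2 h1
      push_cast [hE] at *
      linarith
  rw [count_mul_blocks]
  push_cast
  calc |∑ j ∈ range M, ((((range K).filter (fun r => a (j * K + r) = α)).card : ℝ))
        - M * (((range K).filter (fun n => a n = α)).card : ℝ)|
      = |∑ j ∈ range M, (((((range K).filter (fun r => a (j * K + r) = α)).card : ℝ))
          - (((range K).filter (fun n => a n = α)).card : ℝ))| := by
        rw [Finset.sum_sub_distrib, Finset.sum_const, Finset.card_range, nsmul_eq_mul]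
    _ ≤ ∑ j ∈ range M, |(((((range K).filter (fun r => a (j * K + r) = α)).card : ℝ))
          - (((range K).filter (fun n => a n = α)).card : ℝ))| := Finset.abs_sum_le_sum_abs _ _
    _ ≤ ∑ _j ∈ range M, ((K : ℝ) - U.card) := Finset.sum_le_sum (fun j _ => hblock j)
    _ = M * ((K : ℝ) - U.card) := by rw [Finset.sum_const, Finset.card_range, nsmul_eq_mul]

open Finset

set_option maxHeartbeats 2000000 in
open Finset in
theorem stmt_10 {A : Type*} [Fintype A] [DecidableEq A]
    (a : ℕ → A) (k : ℕ) (hk : 2 ≤ k) (η : ℝ) (hη : 0 < η)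
    (hsync : ∀ n₁ : ℕ, ∃ U : Finset ℕ, U ⊆ Finset.range (k ^ n₁) ∧
      ((k : ℝ) ^ n₁ - (k : ℝ) ^ ((n₁ : ℝ) * (1 - η)) ≤ (U.card : ℝ)) ∧
      ∀ u ∈ U, ∀ n : ℕ, n % k ^ n₁ = u → a n = a u) :
    ∀ α : A, ∃ ϑ : ℝ,
      Filter.Tendsto
        (fun N : ℕ => (((Finset.range N).filter (fun n => a n = α)).card : ℝ) / N)
        Filter.atTop (nhds ϑ) ∧
      ∃ C > (0 : ℝ), ∀ n₁ : ℕ,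
        |(((Finset.range (k ^ n₁)).filter (fun u => a u = α)).card : ℝ) / (k : ℝ) ^ n₁ - ϑ| ≤
          C * (k : ℝ) ^ (-(η * n₁)) := by
  choose U hU hcard hsyn using hsync
  have hk0 : (0 : ℝ) < k := by positivity
  have hk1 : (1 : ℝ) < k := by exact_mod_cast Nat.lt_of_lt_of_le one_lt_two hk
  intro α
  set c : ℕ → ℕ := fun N => ((Finset.range N).filter (fun n => a n = α)).card with hcdef
  set d : ℕ → ℝ := fun m => (c (k ^ m) : ℝ) / (k : ℝ) ^ m with hddef
  have hKpos : ∀ m : ℕ, (0 : ℝ) < (k : ℝ) ^ m := fun m => by positivity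
  -- the "bad set" size bound
  have hEbound : ∀ m : ℕ, ((k : ℝ) ^ m - ((U m).card : ℝ)) ≤ (k : ℝ) ^ ((m : ℝ) * (1 - η)) := by
    intro m; have := hcard m; linarith
  have hEnonneg : ∀ m : ℕ, (0 : ℝ) ≤ (k : ℝ) ^ m - ((U m).card : ℝ) := by
    intro m
    have : (U m).card ≤ k ^ m := by simpa using Finset.card_le_card (hU m)
    have := (Nat.cast_le (α := ℝ)).2 this
    push_cast at this
    linarith
  have hpow : ∀ m : ℕ, (k : ℝ) ^ ((m : ℝ) * (1 - η)) / (k : ℝ) ^ m = (k : ℝ) ^ (-(η * m)) := by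
    intro m
    rw [← Real.rpow_natCast (k : ℝ) m, ← Real.rpow_sub hk0]
    congr 1; ring
  -- pairwise estimate
  have hdd : ∀ m n : ℕ, m ≤ n → |d n - d m| ≤ (k : ℝ) ^ (-(η * m)) := by
    intro m n hmn
    have hMK : k ^ n = k ^ (n - m) * k ^ m := by
      rw [← pow_add, Nat.sub_add_cancel hmn]
    have hest := count_est a α (k ^ m) (U m) (hU m) (hsyn m) (k ^ (n - m))
    rw [← hMK] at hest
    have hdiff : d n - d m
        = ((c (k ^ n) : ℝ) - (k : ℝ) ^ (n - m) * (c (k ^ m) : ℝ)) / (k : ℝ) ^ n := by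
      rw [hddef]
      have h1 : ((k : ℝ) ^ n) = (k : ℝ) ^ (n - m) * (k : ℝ) ^ m := by
        rw [← pow_add, Nat.sub_add_cancel hmn]
      field_simp
      rw [h1]; ring
    rw [hdiff, abs_div, abs_of_pos (hKpos n)]
    rw [div_le_iff₀ (hKpos n)]
    calc |(c (k ^ n) : ℝ) - (k : ℝ) ^ (n - m) * (c (k ^ m) : ℝ)|
        ≤ (k : ℝ) ^ (n - m) * ((k : ℝ) ^ m - ((U m).card : ℝ)) := by
          convert hest using 2 <;> push_cast <;> ring
      _ ≤ (k : ℝ) ^ (n - m) * (k : ℝ) ^ ((m : ℝ) * (1 - η)) := by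
          have := hEbound m
          have h0 : (0:ℝ) ≤ (k : ℝ) ^ (n - m) := le_of_lt (hKpos _)
          nlinarith
      _ = (k : ℝ) ^ (-(η * m)) * (k : ℝ) ^ n := by
          have h1 : ((k : ℝ) ^ n) = (k : ℝ) ^ (n - m) * (k : ℝ) ^ m := by
            rw [← pow_add, Nat.sub_add_cancel hmn]
          rw [← hpow m, h1]
          field_simp
  -- geometric identity
  have hgeo : ∀ m : ℕ, (k : ℝ) ^ (-(η * m)) = ((k : ℝ) ^ (-η)) ^ m := by
    intro m
    rw [← Real.rpow_natCast ((k : ℝ) ^ (-η)) m, ← Real.rpow_mul (le_of_lt hk0)]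
    congr 1; ring
  have hrlt : (k : ℝ) ^ (-η) < 1 :=
    Real.rpow_lt_one_of_one_lt_of_neg hk1 (by linarith)
  have hrpos : (0 : ℝ) < (k : ℝ) ^ (-η) := Real.rpow_pos_of_pos hk0 _
  -- Cauchy
  have hcauchy : CauchySeq d := by
    apply cauchySeq_of_le_geometric ((k : ℝ) ^ (-η)) 1 hrlt
    intro n
    rw [Real.dist_eq, abs_sub_comm, one_mul, ← hgeo]
    exact hdd n (n + 1) (Nat.le_succ n)
  obtain ⟨ϑ, hϑ⟩ := cauchySeq_tendsto_of_complete hcauchy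
  have hlim : ∀ m : ℕ, |d m - ϑ| ≤ (k : ℝ) ^ (-(η * m)) := by
    intro m
    have htend : Filter.Tendsto (fun n => |d m - d n|) Filter.atTop (nhds |d m - ϑ|) :=
      (Filter.Tendsto.sub tendsto_const_nhds hϑ).abs
    apply le_of_tendsto htend
    filter_upwards [Filter.eventually_ge_atTop m] with n hn
    rw [abs_sub_comm]
    exact hdd m n hn
  -- general N estimate
  have hgen : ∀ m N : ℕ, 0 < N →
      |(c N : ℝ) / N - d m| ≤ (k : ℝ) ^ (-(η * m)) + 2 * (k : ℝ) ^ m / N := by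
    intro m N hN
    have hkpos' : 0 < k := by omega
    have hKnpos : 0 < k ^ m := Nat.pow_pos hkpos'
    set M : ℕ := N / k ^ m with hM
    set s : ℕ := N % k ^ m with hs
    have hdecomp : M * k ^ m + s = N := by
      rw [Nat.mul_comm]; exact Nat.div_add_mod N (k ^ m)
    have hsK : s < k ^ m := Nat.mod_lt _ hKnpos
    have hmono : c (M * k ^ m) ≤ c N := by
      simp only [hcdef]
      exact Finset.card_le_card (Finset.filter_subset_filter _
        (Finset.range_subset_range.2 (Nat.div_mul_le_self N (k ^ m))))
    have hupper : c N ≤ c (M * k ^ m) + s := by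
      simp only [hcdef]
      have := count_le_add (fun n => a n = α) (M * k ^ m) s
      rw [hdecomp] at this
      exact this
    have hest := count_est a α (k ^ m) (U m) (hU m) (hsyn m) M
    have hcKle : (c (k ^ m) : ℝ) ≤ (k : ℝ) ^ m := by
      have : c (k ^ m) ≤ k ^ m := by
        simp only [hcdef]
        exact le_trans (Finset.card_le_card (Finset.filter_subset _ _))
          (le_of_eq (Finset.card_range _))
      exact_mod_cast this
    have hNrpos : (0 : ℝ) < (N : ℝ) := by exact_mod_cast hN
    have hKrpos : (0 : ℝ) < (k : ℝ) ^ m := hKpos m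
    have hNr : (N : ℝ) = (M : ℝ) * (k : ℝ) ^ m + (s : ℝ) := by
      exact_mod_cast hdecomp.symm
    have hsr : (s : ℝ) ≤ (k : ℝ) ^ m := by exact_mod_cast hsK.le
    have hsr0 : (0 : ℝ) ≤ (s : ℝ) := Nat.cast_nonneg s
    have hcK0 : (0 : ℝ) ≤ (c (k ^ m) : ℝ) := Nat.cast_nonneg _
    -- step 1
    have h1 : |(c N : ℝ) - (c (M * k ^ m) : ℝ)| ≤ (k : ℝ) ^ m := by
      have ha : ((c (M * k ^ m)) : ℝ) ≤ (c N : ℝ) := by exact_mod_cast hmono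
      have hb : (c N : ℝ) ≤ (c (M * k ^ m) : ℝ) + s := by exact_mod_cast hupper
      rw [abs_le]
      constructor <;> linarith
    -- step 2
    have h2 : |(c (M * k ^ m) : ℝ) - (M : ℝ) * (c (k ^ m) : ℝ)|
        ≤ (M : ℝ) * ((k : ℝ) ^ m - ((U m).card : ℝ)) := by
      convert hest using 3 <;> push_cast <;> ring
    -- step 3
    have hdm : (N : ℝ) * d m = (M : ℝ) * (c (k ^ m) : ℝ)
        + (s : ℝ) * (c (k ^ m) : ℝ) / (k : ℝ) ^ m := by
      rw [hddef]
      rw [hNr]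
      field_simp
    have h3 : |(M : ℝ) * (c (k ^ m) : ℝ) - (N : ℝ) * d m| ≤ (k : ℝ) ^ m := by
      rw [hdm]
      have hterm : (s : ℝ) * (c (k ^ m) : ℝ) / (k : ℝ) ^ m ≤ (k : ℝ) ^ m := by
        rw [div_le_iff₀ hKrpos]
        nlinarith
      have hterm0 : (0 : ℝ) ≤ (s : ℝ) * (c (k ^ m) : ℝ) / (k : ℝ) ^ m := by positivity
      rw [abs_le]
      constructor <;> linarith
    -- combine
    have key : |(c N : ℝ) - (N : ℝ) * d m|
        ≤ (M : ℝ) * ((k : ℝ) ^ m - ((U m).card : ℝ)) + 2 * (k : ℝ) ^ m := by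
      have t1 := abs_sub_le ((c N : ℝ)) ((c (M * k ^ m) : ℝ)) ((N : ℝ) * d m)
      have t2 := abs_sub_le ((c (M * k ^ m) : ℝ)) ((M : ℝ) * (c (k ^ m) : ℝ)) ((N : ℝ) * d m)
      linarith
    have heq : (c N : ℝ) / N - d m = ((c N : ℝ) - (N : ℝ) * d m) / N := by
      field_simp
    have hMrKr : (M : ℝ) * (k : ℝ) ^ m ≤ (N : ℝ) := by linarith
    have hE0 := hEnonneg m
    calc |(c N : ℝ) / N - d m| = |(c N : ℝ) - (N : ℝ) * d m| / N := by
          rw [heq, abs_div, abs_of_pos hNrpos]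
      _ ≤ ((M : ℝ) * ((k : ℝ) ^ m - ((U m).card : ℝ)) + 2 * (k : ℝ) ^ m) / N := by
          exact div_le_div_of_nonneg_right key hNrpos.le
      _ ≤ ((k : ℝ) ^ m - ((U m).card : ℝ)) / (k : ℝ) ^ m + 2 * (k : ℝ) ^ m / N := by
          rw [add_div]
          have : (M : ℝ) * ((k : ℝ) ^ m - ((U m).card : ℝ)) / N
              ≤ ((k : ℝ) ^ m - ((U m).card : ℝ)) / (k : ℝ) ^ m := by
            rw [div_le_div_iff₀ hNrpos hKrpos]
            have h4 : ((k:ℝ)^m - ((U m).card : ℝ)) * ((M : ℝ) * (k:ℝ)^m)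
                ≤ ((k:ℝ)^m - ((U m).card : ℝ)) * (N : ℝ) :=
              mul_le_mul_of_nonneg_left hMrKr hE0
            nlinarith [h4]
          linarith
      _ ≤ (k : ℝ) ^ (-(η * m)) + 2 * (k : ℝ) ^ m / N := by
          have hE := hEbound m
          have : ((k : ℝ) ^ m - ((U m).card : ℝ)) / (k : ℝ) ^ m
              ≤ (k : ℝ) ^ ((m : ℝ) * (1 - η)) / (k : ℝ) ^ m := by
            exact div_le_div_of_nonneg_right hE hKrpos.le
          rw [← hpow m]
          linarith
  refine ⟨ϑ, ?_, 1, one_pos, fun n₁ => ?_⟩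
  · rw [Metric.tendsto_atTop]
    intro ε hε
    -- choose m with 2 * k^(-(η m)) < ε/2
    have htend0 : Filter.Tendsto (fun m : ℕ => (k : ℝ) ^ (-(η * m))) Filter.atTop (nhds 0) := by
      simp only [hgeo]
      exact tendsto_pow_atTop_nhds_zero_of_lt_one (le_of_lt hrpos) hrlt
    have : ∀ᶠ m in Filter.atTop, (k : ℝ) ^ (-(η * (m:ℕ))) < ε / 8 := by
      have := htend0.eventually (eventually_lt_nhds (show (0:ℝ) < ε/8 by linarith))
      exact this
    obtain ⟨m, hm⟩ := this.exists
    set K : ℝ := (k : ℝ) ^ m with hKdef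
    refine ⟨⌈4 * K / ε⌉₊ + 1, fun N hN => ?_⟩
    have hN1 : 1 ≤ N := le_trans (Nat.le_add_left 1 _) hN
    have hNR : (4 * K / ε) < (N : ℝ) := by
      calc 4 * K / ε ≤ (⌈4 * K / ε⌉₊ : ℝ) := Nat.le_ceil _
        _ < (⌈4 * K / ε⌉₊ : ℝ) + 1 := by linarith
        _ ≤ (N : ℝ) := by exact_mod_cast hN
    have hNpos : (0 : ℝ) < N := by positivity
    have h2K : 2 * K / N < ε / 2 := by
      rw [div_lt_iff₀ hNpos]
      rw [div_lt_iff₀ hε] at hNR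
      nlinarith
    rw [Real.dist_eq]
    calc |(c N : ℝ) / N - ϑ| ≤ |(c N : ℝ) / N - d m| + |d m - ϑ| := abs_sub_le _ _ _
      _ ≤ ((k : ℝ) ^ (-(η * m)) + 2 * K / N) + (k : ℝ) ^ (-(η * m)) := by
          have := hgen m N hN1
          have := hlim m
          linarith
      _ < ε := by
          have := hm
          linarith
  · rw [one_mul]
    exact hlim n₁
end

section
/- Let k ≥ 2, and let a : ℕ → 𝒜 be a sequence such that for each n₁ the value a(n) depends only on n mod k^{n₁} outside an exceptional set of at most k^{n₁(1−η)} residue classes (η > 0), and assume the frequency ϑ_α of each letter α exists with (1/k^{n₁})#{u < k^{n₁} : a(u) = α} = ϑ_α + O(k^{−η n₁}). Let c > 1 be a non-integer and assume the equidistribution #{n ≤ N : ⌊n^c⌋ ≡ u (mod m)} = N/m + O((N/m)^{1−δ}) holds uniformly for m ≤ N^θ. Then (1/N)·#{n < N : a(⌊n^c⌋) = α} → ϑ_α as N → ∞, with a power-saving error term. -/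
open Finset Real

set_option maxHeartbeats 4000000 in
theorem stmt_11 {A : Type*} [Fintype A] [DecidableEq A]
    (a : ℕ → A) (k : ℕ) (hk : 2 ≤ k) (η : ℝ) (hη : 0 < η)
    (hsync : ∀ n₁ : ℕ, ∃ U : Finset ℕ, U ⊆ Finset.range (k ^ n₁) ∧
      ((k : ℝ) ^ n₁ - (k : ℝ) ^ ((n₁ : ℝ) * (1 - η)) ≤ (U.card : ℝ)) ∧
      ∀ u ∈ U, ∀ n : ℕ, n % k ^ n₁ = u → a n = a u)
    (ϑ : A → ℝ) (C₀ : ℝ)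
    (hfreq : ∀ α : A, ∀ n₁ : ℕ,
      |(((Finset.range (k ^ n₁)).filter (fun u => a u = α)).card : ℝ) / (k : ℝ) ^ n₁ -
        ϑ α| ≤ C₀ * (k : ℝ) ^ (-(η * n₁)))
    (c : ℝ) (hc : 1 < c) (hci : ∀ z : ℤ, c ≠ z)
    (θ δ C₁ : ℝ) (hθ : 0 < θ) (hδ : 0 < δ) (hC₁ : 0 < C₁)
    (hequi : ∀ N m : ℕ, ∀ u : ℤ, 1 ≤ N → 1 ≤ m → (m : ℝ) ≤ (N : ℝ) ^ θ →
      0 ≤ u → u < m →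
      |(((Finset.Icc 1 N).filter
          (fun n : ℕ => ⌊((n : ℝ)) ^ c⌋ % (m : ℤ) = u)).card : ℝ) - (N : ℝ) / m| ≤
        C₁ * ((N : ℝ) / m) ^ (1 - δ)) :
    ∀ α : A,
      Filter.Tendsto
        (fun N : ℕ =>
          (((Finset.range N).filter (fun n : ℕ => a ((⌊((n : ℝ)) ^ c⌋).toNat) = α)).card : ℝ) / N)
        Filter.atTop (nhds (ϑ α)) ∧
      ∃ ε > (0 : ℝ), ∃ C₂ > (0 : ℝ), ∀ N : ℕ, 1 ≤ N →
        |(((Finset.range N).filter (fun n : ℕ => a ((⌊((n : ℝ)) ^ c⌋).toNat) = α)).card : ℝ) / N - ϑ α| ≤ C₂ * (N : ℝ) ^ (-ε) := by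
  intro α
  have hkR : (2:ℝ) ≤ (k:ℝ) := by exact_mod_cast hk
  have hk0 : (0:ℝ) < (k:ℝ) := by linarith
  have hC₀ : 0 ≤ C₀ := by
    have h := hfreq α 0
    have h2 : (0:ℝ) ≤ C₀ * (k:ℝ) ^ (-(η * (0:ℕ))) := le_trans (abs_nonneg _) h
    simpa using h2
  set θ' : ℝ := min θ (1/2) with hθ'def
  have hθ'pos : 0 < θ' := lt_min hθ (by norm_num)
  have hθ'le : θ' ≤ θ := min_le_left _ _
  have hθ'half : θ' ≤ 1/2 := min_le_right _ _
  set ε : ℝ := min 1 (min (δ*(1-θ')) (θ'*η)) with hεdef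
  have hεpos : 0 < ε := lt_min one_pos (lt_min (by nlinarith) (by positivity))
  have hε1 : ε ≤ 1 := min_le_left _ _
  have hεδ : ε ≤ δ*(1-θ') := le_trans (min_le_right _ _) (min_le_left _ _)
  have hεη : ε ≤ θ'*η := le_trans (min_le_right _ _) (min_le_right _ _)
  set C₂ : ℝ := 1 + 2*C₁ + (C₀+2)*(k:ℝ)^η with hC₂def
  have hC₂pos : 0 < C₂ := by positivity
  have key : ∀ N : ℕ, 1 ≤ N →
      |(((Finset.range N).filter (fun n : ℕ => a ((⌊((n : ℝ)) ^ c⌋).toNat) = α)).card : ℝ) / N - ϑ α|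
        ≤ C₂ * (N : ℝ) ^ (-ε) := by
    intro N hN
    have hN1 : (1:ℝ) ≤ (N:ℝ) := by exact_mod_cast hN
    have hNpos : (0:ℝ) < (N:ℝ) := by linarith
    -- choice of modulus m = k ^ n₁
    set M : ℕ := ⌊(N:ℝ)^θ'⌋₊ with hMdef
    have hNθ'1 : (1:ℝ) ≤ (N:ℝ)^θ' := by
      calc (1:ℝ) = (N:ℝ)^(0:ℝ) := (Real.rpow_zero _).symm
      _ ≤ (N:ℝ)^θ' := rpow_le_rpow_of_exponent_le hN1 hθ'pos.le
    have hM1 : 1 ≤ M := Nat.le_floor (by simpa using hNθ'1)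
    set n₁ : ℕ := Nat.log k M with hn₁def
    set m : ℕ := k ^ n₁ with hmdef
    have hm1 : 1 ≤ m := Nat.one_le_pow _ _ (by omega)
    have hm1R : (1:ℝ) ≤ (m:ℝ) := by exact_mod_cast hm1
    have hmpos : (0:ℝ) < (m:ℝ) := by linarith
    have hmM : m ≤ M := Nat.pow_log_le_self k (by omega)
    have hmθ' : (m:ℝ) ≤ (N:ℝ)^θ' := le_trans (by exact_mod_cast hmM) (Nat.floor_le (by positivity))
    have hmθ : (m:ℝ) ≤ (N:ℝ)^θ := hmθ'.trans (rpow_le_rpow_of_exponent_le hN1 hθ'le)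
    have hmlb : (N:ℝ)^θ' < (k:ℝ) * m := by
      have h2 : M + 1 ≤ m * k := by
        have h5 := Nat.lt_pow_succ_log_self (show 1 < k by omega) M
        rw [pow_succ, ← hn₁def, ← hmdef] at h5
        omega
      have h3 : (N:ℝ)^θ' < ((M:ℕ):ℝ) + 1 := Nat.lt_floor_add_one _
      have h4 : ((M:ℕ):ℝ) + 1 ≤ (m:ℝ) * k := by exact_mod_cast h2
      linarith
    have hkpow : ((m:ℕ):ℝ) = (k:ℝ)^n₁ := by push_cast [hmdef]; ring
    have hrpow_id : (k:ℝ)^((n₁:ℝ)*(1-η)) = (m:ℝ)^(1-η) := by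
      rw [Real.rpow_mul hk0.le, Real.rpow_natCast, hkpow]
    clear_value m n₁ M
    -- floor facts
    have hflnn : ∀ n : ℕ, n ∈ Finset.Icc 1 N → (0:ℤ) ≤ ⌊((n:ℝ))^c⌋ := by
      intro n hn
      have h1 : (1:ℝ) ≤ (n:ℝ) := by exact_mod_cast (Finset.mem_Icc.mp hn).1
      have h2 : (1:ℝ) ≤ (n:ℝ)^c := by
        calc (1:ℝ) = (n:ℝ)^(0:ℝ) := (Real.rpow_zero _).symm
        _ ≤ (n:ℝ)^c := rpow_le_rpow_of_exponent_le h1 (by linarith)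
      exact Int.floor_nonneg.mpr (by linarith)
    have hcast : ∀ n ∈ Finset.Icc 1 N,
        (((⌊((n:ℝ))^c⌋.toNat % m : ℕ)) : ℤ) = ⌊((n:ℝ))^c⌋ % (m:ℤ) := by
      intro n hn
      push_cast [Int.toNat_of_nonneg (hflnn n hn)]
      ring
    obtain ⟨U, hUsub, hUcard, hUsync⟩ := hsync n₁
    rw [← hmdef] at hUsub hUsync
    set G : Finset ℕ := U.filter (fun u => a u = α) with hGdef
    have hGU : G ⊆ U := Finset.filter_subset _ _
    have hGsub : G ⊆ Finset.range m := hGU.trans hUsub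
    set p : ℕ → Prop := fun n => a ((⌊((n : ℝ)) ^ c⌋).toNat) = α with hpdef
    set s : Finset ℕ := (Finset.Icc 1 N).filter (fun n => p n) with hsdef
    set F : ℕ → Finset ℕ :=
      fun u => (Finset.Icc 1 N).filter (fun n : ℕ => ⌊((n : ℝ)) ^ c⌋ % (m : ℤ) = (u:ℤ)) with hFdef
    have hE : ∀ u : ℕ, u < m →
        |((F u).card : ℝ) - (N:ℝ)/m| ≤ C₁ * ((N:ℝ)/m)^(1-δ) := by
      intro u hu
      exact hequi N m (u:ℤ) hN hm1 hmθ (by positivity) (by exact_mod_cast hu)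
    -- lower bound: good fibers are inside s
    have hFP : ∀ u ∈ G, F u ⊆ s := by
      intro u hu n hn
      obtain ⟨hnI, hnr⟩ := Finset.mem_filter.mp hn
      refine Finset.mem_filter.mpr ⟨hnI, ?_⟩
      have hu' : u ∈ U := (Finset.mem_filter.mp hu).1
      have hua : a u = α := (Finset.mem_filter.mp hu).2
      have hres : ⌊((n:ℝ))^c⌋.toNat % m = u := by
        have h1 := (hcast n hnI).trans hnr
        exact_mod_cast h1
      show a ((⌊((n : ℝ)) ^ c⌋).toNat) = α
      rw [hUsync u hu' _ hres, hua]
    have hdisj : ∀ u ∈ G, ∀ v ∈ G, u ≠ v → Disjoint (F u) (F v) := by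
      intro u _ v _ huv
      refine Finset.disjoint_left.mpr ?_
      intro n hnu hnv
      have h1 := (Finset.mem_filter.mp hnu).2
      have h2 := (Finset.mem_filter.mp hnv).2
      exact huv (by exact_mod_cast h1.symm.trans h2)
    have hlow : ∑ u ∈ G, (F u).card ≤ s.card := by
      rw [← Finset.card_biUnion hdisj]
      exact Finset.card_le_card (Finset.biUnion_subset.mpr hFP)
    -- upper bound via fiber decomposition
    have hfib : s.card = ∑ u ∈ Finset.range m,
        ((s.filter (fun n : ℕ => ⌊((n : ℝ)) ^ c⌋.toNat % m = u)).card) :=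
      Finset.card_eq_sum_card_fiberwise (fun n _ => Finset.mem_range.mpr (Nat.mod_lt _ (by omega)))
    set cf : ℕ → ℕ := fun u => (s.filter (fun n : ℕ => ⌊((n : ℝ)) ^ c⌋.toNat % m = u)).card with hcfdef
    have hcE : ∀ u, cf u ≤ (F u).card := by
      intro u
      apply Finset.card_le_card
      intro n hn
      obtain ⟨hns, hnr⟩ := Finset.mem_filter.mp hn
      have hnI : n ∈ Finset.Icc 1 N := (Finset.mem_filter.mp hns).1
      refine Finset.mem_filter.mpr ⟨hnI, ?_⟩
      rw [← hcast n hnI, hnr]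
    have hc0 : ∀ u ∈ U, a u ≠ α → cf u = 0 := by
      intro u hu hua
      rw [hcfdef]
      simp only [Finset.card_eq_zero]
      apply Finset.eq_empty_of_forall_notMem
      intro n hn
      obtain ⟨hns, hnr⟩ := Finset.mem_filter.mp hn
      have hpn : p n := (Finset.mem_filter.mp hns).2
      exact hua ((hUsync u hu _ hnr).symm.trans hpn)
    have hupper : s.card ≤ ∑ u ∈ G, (F u).card + ∑ u ∈ Finset.range m \ U, (F u).card := by
      rw [hfib, ← Finset.sum_sdiff hUsub]
      have h1 : ∑ u ∈ Finset.range m \ U, cf u ≤ ∑ u ∈ Finset.range m \ U, (F u).card :=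
        Finset.sum_le_sum (fun u _ => hcE u)
      have h2 : ∑ u ∈ U, cf u ≤ ∑ u ∈ G, (F u).card := by
        rw [← Finset.sum_filter_add_sum_filter_not U (fun u => a u = α) cf]
        have h3 : ∑ u ∈ U.filter (fun u => ¬ a u = α), cf u = 0 :=
          Finset.sum_eq_zero (fun u hu => hc0 u (Finset.mem_filter.mp hu).1 (Finset.mem_filter.mp hu).2)
        rw [h3, add_zero]
        exact Finset.sum_le_sum (fun u _ => hcE u)
      exact le_trans (Nat.add_le_add h1 h2) (Nat.add_comm _ _).le
    -- compare range N with Icc 1 N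
    set Sc : ℕ := ((Finset.range N).filter (fun n : ℕ => a ((⌊((n : ℝ)) ^ c⌋).toNat) = α)).card
      with hScdef
    have hScs : |(Sc:ℝ) - (s.card:ℝ)| ≤ 1 := by
      have h1 : Sc ≤ s.card + 1 := by
        have hsub : (Finset.range N).filter (fun n : ℕ => a ((⌊((n : ℝ)) ^ c⌋).toNat) = α)
            ⊆ insert 0 s := by
          intro n hn
          obtain ⟨hnr, hnp⟩ := Finset.mem_filter.mp hn
          rcases Nat.eq_zero_or_pos n with h | h
          · simp [h]
          · refine Finset.mem_insert_of_mem (Finset.mem_filter.mpr ⟨?_, hnp⟩)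
            exact Finset.mem_Icc.mpr ⟨h, le_of_lt (Finset.mem_range.mp hnr)⟩
        calc Sc ≤ (insert 0 s).card := Finset.card_le_card hsub
        _ ≤ s.card + 1 := Finset.card_insert_le _ _
      have h2 : s.card ≤ Sc + 1 := by
        have hsub : s ⊆ insert N ((Finset.range N).filter
            (fun n : ℕ => a ((⌊((n : ℝ)) ^ c⌋).toNat) = α)) := by
          intro n hn
          obtain ⟨hnI, hnp⟩ := Finset.mem_filter.mp hn
          obtain ⟨hn1, hnN⟩ := Finset.mem_Icc.mp hnI
          rcases eq_or_lt_of_le hnN with h | h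
          · simp [h]
          · exact Finset.mem_insert_of_mem (Finset.mem_filter.mpr ⟨Finset.mem_range.mpr h, hnp⟩)
        calc s.card ≤ _ := Finset.card_le_card hsub
        _ ≤ Sc + 1 := Finset.card_insert_le _ _
      have h1R : (Sc:ℝ) ≤ (s.card:ℝ) + 1 := by exact_mod_cast h1
      have h2R : (s.card:ℝ) ≤ (Sc:ℝ) + 1 := by exact_mod_cast h2
      rw [abs_le]; constructor <;> linarith
    -- real estimates
    set Q : ℝ := (N:ℝ)/m with hQdef
    set R : ℝ := C₁ * Q^(1-δ) with hRdef
    have hQ0 : 0 ≤ Q := by positivity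
    have hR0 : 0 ≤ R := by positivity
    clear_value Q R
    have hGlow : (G.card : ℝ) * (Q - R) ≤ ∑ u ∈ G, ((F u).card : ℝ) := by
      have := Finset.card_nsmul_le_sum G (fun u => ((F u).card : ℝ)) (Q - R) ?_
      · rwa [nsmul_eq_mul] at this
      · intro u hu
        have h := hE u (Finset.mem_range.mp (hGsub hu))
        have := (abs_le.mp h).1
        linarith
    have hGhigh : ∑ u ∈ G, ((F u).card : ℝ) ≤ (G.card : ℝ) * (Q + R) := by
      have := Finset.sum_le_card_nsmul G (fun u => ((F u).card : ℝ)) (Q + R) ?_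
      · rwa [nsmul_eq_mul] at this
      · intro u hu
        have h := hE u (Finset.mem_range.mp (hGsub hu))
        have := (abs_le.mp h).2
        linarith
    have hBadSum : ∑ u ∈ Finset.range m \ U, ((F u).card : ℝ)
        ≤ ((Finset.range m \ U).card : ℝ) * (Q + R) := by
      have := Finset.sum_le_card_nsmul (Finset.range m \ U) (fun u => ((F u).card : ℝ)) (Q + R) ?_
      · rwa [nsmul_eq_mul] at this
      · intro u hu
        have hum : u < m := Finset.mem_range.mp (Finset.mem_sdiff.mp hu).1
        have h := hE u hum
        have := (abs_le.mp h).2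
        linarith
    -- exceptional class count
    have hbadcard : (((Finset.range m \ U).card : ℕ) : ℝ) ≤ (m:ℝ)^(1-η) := by
      have h1 : (Finset.range m \ U).card = m - U.card := by
        rw [Finset.card_sdiff_of_subset hUsub, Finset.card_range]
      have h2 : U.card ≤ m := by
        have := Finset.card_le_card hUsub
        simpa using this
      have h3 : (((Finset.range m \ U).card : ℕ) : ℝ) = (m:ℝ) - U.card := by
        rw [h1]
        push_cast [h2]
        ring
      rw [h3]
      rw [hrpow_id, ← hkpow] at hUcard
      linarith
    -- frequency estimate for G.card
    have hGest : |(G.card:ℝ) - ϑ α * m| ≤ (C₀+1)*(m:ℝ)^(1-η) := by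
      have hfr := hfreq α n₁
      have hkm : (k:ℝ)^(-(η*(n₁:ℝ))) = (m:ℝ)^(-η) := by
        rw [show -(η*(n₁:ℝ)) = (n₁:ℝ)*(-η) by ring, Real.rpow_mul hk0.le, Real.rpow_natCast, hkpow]
      rw [hkm, ← hmdef, ← hkpow] at hfr
      set F' : Finset ℕ := (Finset.range m).filter (fun u => a u = α) with hF'def
      have hfr' : |(F'.card : ℝ) / (m:ℝ) - ϑ α| ≤ C₀ * (m:ℝ)^(-η) := hfr
      have hmη : (m:ℝ)^(-η) * m = (m:ℝ)^(1-η) := by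
        rw [show (1:ℝ)-η = -η + 1 by ring, Real.rpow_add hmpos, Real.rpow_one]
      have hF'bound : |(F'.card : ℝ) - ϑ α * m| ≤ C₀ * (m:ℝ)^(1-η) := by
        have hid : ((F'.card:ℝ)/(m:ℝ) - ϑ α) * m = (F'.card:ℝ) - ϑ α * m := by
          field_simp
        have h1' := mul_le_mul_of_nonneg_right (abs_le.mp hfr').1 hmpos.le
        have h2' := mul_le_mul_of_nonneg_right (abs_le.mp hfr').2 hmpos.le
        rw [hid] at h1' h2'
        have e : C₀ * (m:ℝ)^(-η) * m = C₀ * (m:ℝ)^(1-η) := by rw [mul_assoc, hmη]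
        rw [abs_le]
        constructor <;> · linarith [e, h1', h2']
      -- |G.card - F'.card| ≤ badcard
      have hGF : G.card ≤ F'.card := by
        apply Finset.card_le_card
        intro u hu
        exact Finset.mem_filter.mpr ⟨hUsub (Finset.mem_filter.mp hu).1, (Finset.mem_filter.mp hu).2⟩
      have hFG : F'.card ≤ G.card + (Finset.range m \ U).card := by
        have hsub : F' ⊆ G ∪ (Finset.range m \ U) := by
          intro u hu
          obtain ⟨hur, hua⟩ := Finset.mem_filter.mp hu
          by_cases huU : u ∈ U
          · exact Finset.mem_union_left _ (Finset.mem_filter.mpr ⟨huU, hua⟩)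
          · exact Finset.mem_union_right _ (Finset.mem_sdiff.mpr ⟨hur, huU⟩)
        exact le_trans (Finset.card_le_card hsub) (Finset.card_union_le _ _)
      have hGFR : (G.card:ℝ) ≤ (F'.card:ℝ) := by exact_mod_cast hGF
      have hFGR : (F'.card:ℝ) ≤ (G.card:ℝ) + (m:ℝ)^(1-η) := by
        have : (F'.card:ℝ) ≤ (G.card:ℝ) + ((Finset.range m \ U).card : ℝ) := by exact_mod_cast hFG
        linarith [hbadcard]
      have h1 := (abs_le.mp hF'bound).1
      have h2 := (abs_le.mp hF'bound).2
      rw [abs_le]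
      constructor <;> · linarith [hGFR, hFGR, h1, h2]
    -- combine to main counting estimate
    have hGm : (G.card : ℝ) ≤ (m:ℝ) := by
      have := Finset.card_le_card hGsub
      exact_mod_cast (by simpa using this)
    clear_value Sc G cf F s
    have hlowR : (G.card:ℝ) * (Q - R) ≤ (s.card : ℝ) := by
      have h1 : ((∑ u ∈ G, (F u).card : ℕ) : ℝ) ≤ (s.card : ℝ) := by exact_mod_cast hlow
      rw [Nat.cast_sum] at h1
      linarith [hGlow]
    have hupR : (s.card : ℝ) ≤ (G.card:ℝ) * (Q + R) + (m:ℝ)^(1-η) * (Q + R) := by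
      have h1 : (s.card : ℝ) ≤ ((∑ u ∈ G, (F u).card : ℕ) : ℝ) +
          ((∑ u ∈ Finset.range m \ U, (F u).card : ℕ) : ℝ) := by exact_mod_cast hupper
      rw [Nat.cast_sum, Nat.cast_sum] at h1
      have hQR : 0 ≤ Q + R := by linarith
      have h2 : ((Finset.range m \ U).card : ℝ) * (Q + R) ≤ (m:ℝ)^(1-η) * (Q + R) :=
        mul_le_mul_of_nonneg_right hbadcard hQR
      linarith [hGhigh, hBadSum]
    have hmQ : (m:ℝ) * Q = (N:ℝ) := by
      rw [hQdef]; field_simp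
    have hm1ηQ : (m:ℝ)^(1-η) * Q = (N:ℝ) * (m:ℝ)^(-η) := by
      rw [show (1:ℝ)-η = -η + 1 by ring, Real.rpow_add hmpos, Real.rpow_one]
      rw [hQdef]; field_simp
    have hmR' : (m:ℝ) * R = C₁ * ((m:ℝ)^δ * (N:ℝ)^(1-δ)) := by
      rw [hRdef, hQdef, div_rpow hNpos.le hmpos.le]
      rw [show (m:ℝ)^δ = (m:ℝ) / (m:ℝ)^(1-δ) by
        rw [eq_div_iff (by positivity), ← Real.rpow_add hmpos]
        norm_num]
      field_simp
    have hm1ηR : (m:ℝ)^(1-η) * R ≤ (m:ℝ) * R := by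
      apply mul_le_mul_of_nonneg_right _ hR0
      calc (m:ℝ)^(1-η) ≤ (m:ℝ)^(1:ℝ) := rpow_le_rpow_of_exponent_le hm1R (by linarith)
      _ = (m:ℝ) := Real.rpow_one _
    have hg1 := (abs_le.mp hGest).1
    have hg2 := (abs_le.mp hGest).2
    have hg1' : -((C₀+1)*(m:ℝ)^(1-η)) * Q ≤ ((G.card:ℝ) - ϑ α * m) * Q :=
      mul_le_mul_of_nonneg_right hg1 hQ0
    have hg2' : ((G.card:ℝ) - ϑ α * m) * Q ≤ (C₀+1)*(m:ℝ)^(1-η) * Q :=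
      mul_le_mul_of_nonneg_right hg2 hQ0
    have hGR : (G.card:ℝ) * R ≤ (m:ℝ) * R := mul_le_mul_of_nonneg_right hGm hR0
    have hGR0 : 0 ≤ (G.card:ℝ) * R := mul_nonneg (Nat.cast_nonneg _) hR0
    have hϑNQ : ϑ α * (N:ℝ) = ϑ α * ((m:ℝ) * Q) := by rw [hmQ]
    have hm1ηQC : (C₀+1)*((m:ℝ)^(1-η)*Q) = (C₀+1)*((N:ℝ)*(m:ℝ)^(-η)) := by rw [hm1ηQ]
    have hmain : |(s.card:ℝ) - ϑ α * N| ≤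
        (C₀+2)*((N:ℝ)*(m:ℝ)^(-η)) + 2*C₁*((m:ℝ)^δ * (N:ℝ)^(1-δ)) := by
      have hA0 : 0 ≤ (N:ℝ)*(m:ℝ)^(-η) := mul_nonneg hNpos.le (Real.rpow_nonneg hmpos.le _)
      have hB0 : 0 ≤ (m:ℝ)^δ * (N:ℝ)^(1-δ) :=
        mul_nonneg (Real.rpow_nonneg hmpos.le _) (Real.rpow_nonneg hNpos.le _)
      have hmR0 : 0 ≤ (m:ℝ) * R := mul_nonneg hmpos.le hR0
      rw [abs_le]
      constructor
      · linarith [hlowR, hg1', hGR, hm1ηQ, hm1ηQC, hmR', hϑNQ, hA0, hB0, hR0, hGR0, hmR0]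
      · linarith [hupR, hg2', hGR, hm1ηR, hm1ηQ, hm1ηQC, hmR', hϑNQ, hA0, hB0, hR0, hGR0, hmR0]
    -- final exponent bookkeeping
    have hterm1 : (1:ℝ)/N ≤ (N:ℝ)^(-ε) := by
      calc (1:ℝ)/N = (N:ℝ)^(-(1:ℝ)) := by
            rw [Real.rpow_neg hNpos.le, Real.rpow_one, one_div]
      _ ≤ (N:ℝ)^(-ε) := rpow_le_rpow_of_exponent_le hN1 (by linarith)
    have hterm2 : (m:ℝ)^(-η) ≤ (k:ℝ)^η * (N:ℝ)^(-ε) := by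
      have hx : (0:ℝ) < (N:ℝ)^θ' / k := by positivity
      have hxm : (N:ℝ)^θ' / k ≤ (m:ℝ) := by
        rw [div_le_iff₀ hk0]
        linarith [hmlb]
      have h1 : (m:ℝ)^(-η) ≤ ((N:ℝ)^θ'/k)^(-η) := by
        rw [Real.rpow_neg hmpos.le, Real.rpow_neg hx.le]
        apply inv_anti₀ (by positivity)
        exact Real.rpow_le_rpow hx.le hxm hη.le
      have h2 : ((N:ℝ)^θ'/k)^(-η) = (k:ℝ)^η * (N:ℝ)^(-(θ'*η)) := by
        rw [div_rpow (by positivity) hk0.le, ← Real.rpow_mul hNpos.le]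
        rw [Real.rpow_neg hk0.le, div_eq_mul_inv, inv_inv]
        rw [show θ'*(-η) = -(θ'*η) by ring]
        ring
      have h3 : (N:ℝ)^(-(θ'*η)) ≤ (N:ℝ)^(-ε) :=
        rpow_le_rpow_of_exponent_le hN1 (by linarith)
      calc (m:ℝ)^(-η) ≤ ((N:ℝ)^θ'/k)^(-η) := h1
      _ = (k:ℝ)^η * (N:ℝ)^(-(θ'*η)) := h2
      _ ≤ (k:ℝ)^η * (N:ℝ)^(-ε) := by
          apply mul_le_mul_of_nonneg_left h3 (by positivity)
    have hterm3 : (m:ℝ)^δ * (N:ℝ)^(1-δ) / N ≤ (N:ℝ)^(-ε) := by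
      have h1 : (m:ℝ)^δ ≤ (N:ℝ)^(θ'*δ) := by
        calc (m:ℝ)^δ ≤ ((N:ℝ)^θ')^δ := Real.rpow_le_rpow hmpos.le hmθ' hδ.le
        _ = (N:ℝ)^(θ'*δ) := (Real.rpow_mul hNpos.le _ _).symm
      have h2 : (m:ℝ)^δ * (N:ℝ)^(1-δ) / N ≤ (N:ℝ)^(θ'*δ) * (N:ℝ)^(1-δ) / N := by
        gcongr
      have h3 : (N:ℝ)^(θ'*δ) * (N:ℝ)^(1-δ) / N = (N:ℝ)^(-(δ*(1-θ'))) := by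
        rw [← Real.rpow_add hNpos, div_eq_mul_inv, ← Real.rpow_neg_one (N:ℝ),
          ← Real.rpow_add hNpos]
        congr 1
        ring
      have h4 : (N:ℝ)^(-(δ*(1-θ'))) ≤ (N:ℝ)^(-ε) :=
        rpow_le_rpow_of_exponent_le hN1 (by linarith)
      linarith
    -- assemble
    have hfinal : |(Sc:ℝ)/N - ϑ α| ≤
        (1 + (C₀+2)*((N:ℝ)*(m:ℝ)^(-η)) + 2*C₁*((m:ℝ)^δ * (N:ℝ)^(1-δ)))/N := by
      have he : (Sc:ℝ)/N - ϑ α = ((Sc:ℝ) - ϑ α * N)/N := by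
        field_simp
      rw [he, abs_div, abs_of_pos hNpos]
      gcongr
      calc |(Sc:ℝ) - ϑ α * N| ≤ |(Sc:ℝ) - (s.card:ℝ)| + |(s.card:ℝ) - ϑ α * N| :=
            abs_sub_le _ _ _
      _ ≤ 1 + ((C₀+2)*((N:ℝ)*(m:ℝ)^(-η)) + 2*C₁*((m:ℝ)^δ * (N:ℝ)^(1-δ))) := by
            linarith [hScs, hmain]
      _ = _ := by ring
    have hsplit : (1 + (C₀+2)*((N:ℝ)*(m:ℝ)^(-η)) + 2*C₁*((m:ℝ)^δ * (N:ℝ)^(1-δ)))/N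
        = 1/N + (C₀+2)*(m:ℝ)^(-η) * ((N:ℝ)/N) + 2*C₁*((m:ℝ)^δ * (N:ℝ)^(1-δ)/N) := by
      field_simp
    have hNN : (N:ℝ)/N = 1 := div_self (ne_of_gt hNpos)
    calc |(Sc:ℝ)/N - ϑ α| ≤ _ := hfinal
    _ = 1/N + (C₀+2)*(m:ℝ)^(-η) + 2*C₁*((m:ℝ)^δ * (N:ℝ)^(1-δ)/N) := by
        rw [hsplit, hNN]; ring
    _ ≤ (N:ℝ)^(-ε) + (C₀+2)*((k:ℝ)^η * (N:ℝ)^(-ε)) + 2*C₁*(N:ℝ)^(-ε) := by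
        have h2 : (C₀+2)*(m:ℝ)^(-η) ≤ (C₀+2)*((k:ℝ)^η * (N:ℝ)^(-ε)) :=
          mul_le_mul_of_nonneg_left hterm2 (by linarith)
        have h3 : 2*C₁*((m:ℝ)^δ * (N:ℝ)^(1-δ)/N) ≤ 2*C₁*(N:ℝ)^(-ε) :=
          mul_le_mul_of_nonneg_left hterm3 (by positivity)
        linarith [hterm1]
    _ = C₂ * (N:ℝ)^(-ε) := by rw [hC₂def]; ring
  refine ⟨?_, ε, hεpos, C₂, hC₂pos, key⟩
  have hzero : Filter.Tendsto
      (fun N : ℕ =>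
        (((Finset.range N).filter (fun n : ℕ => a ((⌊((n : ℝ)) ^ c⌋).toNat) = α)).card : ℝ) / N - ϑ α)
      Filter.atTop (nhds 0) := by
    apply squeeze_zero_norm' (a := fun N : ℕ => C₂ * (N:ℝ)^(-ε))
    · filter_upwards [Filter.eventually_ge_atTop 1] with N hN
      rw [Real.norm_eq_abs]
      exact key N hN
    · have h1 : Filter.Tendsto (fun x : ℝ => x ^ (-ε)) Filter.atTop (nhds 0) :=
        tendsto_rpow_neg_atTop hεpos
      have h2 := (h1.comp (tendsto_natCast_atTop_atTop (R := ℝ))).const_mul C₂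
      simpa using h2
  have := hzero.add_const (ϑ α)
  simpa using this
end

section
/- Let a : ℕ → 𝒜 be a k-automatic sequence. Then every sequence b in the k-kernel of a, i.e., b(n) = a(n·k^λ + r) for some λ ≥ 0 and 0 ≤ r < k^λ, is again k-automatic; moreover, if a is synchronizing with synchronizing word w (for its minimal automaton), then every such b is synchronizing, and w is a synchronizing word for b. -/
/-- A sequence `a` is generated by the finite automaton `(S, δ, s₀, out)` over base `k`
(reading the base-`k` digits of `n` most significant digit first). -/
def GeneratedBy {A S : Type*} (k : ℕ) (δ : S → ℕ → S) (s₀ : S) (out : S → A)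
    (a : ℕ → A) : Prop :=
  ∀ n : ℕ, a n = out (((Nat.digits k n).reverse).foldl δ s₀)

/-- `w` is a synchronizing (reset) word for the transition function `δ`. -/
def SyncWord {S : Type*} (δ : S → ℕ → S) (w : List ℕ) : Prop :=
  ∀ s t : S, w.foldl δ s = w.foldl δ t

/-- Reading the `lam` lowest base-`k` digits of `r`, most significant first, from `s`. -/
def Gfold {S : Type*} (δ : S → ℕ → S) (k : ℕ) : ℕ → ℕ → S → S
  | 0, _, s => s
  | lam + 1, r, s => δ (Gfold δ k lam (r / k) s) (r % k)

lemma key_fold {S : Type*} (δ : S → ℕ → S) (k : ℕ) (hk : 2 ≤ k) :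
    ∀ lam r n s, r < k ^ lam → 0 < n →
      ((Nat.digits k (n * k ^ lam + r)).reverse).foldl δ s
        = Gfold δ k lam r (((Nat.digits k n).reverse).foldl δ s) := by
  intro lam
  induction lam with
  | zero =>
      intro r n s hr hn
      have hr0 : r = 0 := by simpa using hr
      subst hr0
      simp [Gfold]
  | succ lam ih =>
      intro r n s hr hn
      have hkpos : 0 < k := by omega
      have hN : 0 < n * k ^ (lam + 1) + r :=
        Nat.add_pos_left (Nat.mul_pos hn (Nat.pow_pos hkpos)) _
      rw [Nat.digits_def' (by omega : 1 < k) hN]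
      have hdiv : (n * k ^ (lam + 1) + r) / k = n * k ^ lam + r / k := by
        rw [pow_succ, ← mul_assoc, Nat.add_comm, Nat.add_mul_div_right _ _ hkpos,
          Nat.add_comm]
      have hmod : (n * k ^ (lam + 1) + r) % k = r % k := by
        rw [pow_succ, ← mul_assoc, Nat.add_comm, Nat.add_mul_mod_self_right]
      have hr' : r / k < k ^ lam := by
        rw [Nat.div_lt_iff_lt_mul hkpos]
        calc r < k ^ (lam + 1) := hr
        _ = k ^ lam * k := pow_succ k lam
      rw [hdiv, hmod]
      simp only [List.reverse_cons, List.foldl_append, List.foldl_cons, List.foldl_nil]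
      rw [ih (r / k) n s hr' hn]
      rfl

lemma Gfold_comm {S T : Type*} (δ : S → ℕ → S) (δT : T → ℕ → T) (e : S ≃ T)
    (hcomm : ∀ s d, δT (e s) d = e (δ s d)) (k : ℕ) :
    ∀ lam r s, Gfold δT k lam r (e s) = e (Gfold δ k lam r s) := by
  intro lam
  induction lam with
  | zero => intro r s; rfl
  | succ lam ih => intro r s; simp [Gfold, ih, hcomm]

lemma foldl_comm {S T : Type*} (δ : S → ℕ → S) (δT : T → ℕ → T) (e : S ≃ T)
    (hcomm : ∀ s d, δT (e s) d = e (δ s d)) :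
    ∀ (l : List ℕ) (s : S), l.foldl δT (e s) = e (l.foldl δ s) := by
  intro l
  induction l with
  | nil => intro s; rfl
  | cons d l ih => intro s; simp only [List.foldl_cons, hcomm, ih]

lemma foldl_opt {T : Type*} (δT : T → ℕ → T) (t₀ : T)
    (l : List ℕ) (t : T) :
    l.foldl (fun (o : Option T) d => some (δT (o.getD t₀) d)) (some t)
      = some (l.foldl δT t) := by
  induction l generalizing t with
  | nil => rfl
  | cons d l ih => simp [ih]

theorem stmt_15 {A S : Type*} [Fintype S] (k : ℕ) (hk : 2 ≤ k)
    (δ : S → ℕ → S) (s₀ : S) (out : S → A) (a : ℕ → A)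
    (ha : GeneratedBy k δ s₀ out a)
    (lam r : ℕ) (hr : r < k ^ lam) :
    ∃ (S' : Type) (_ : Fintype S') (δ' : S' → ℕ → S') (s₀' : S') (out' : S' → A),
      GeneratedBy k δ' s₀' out' (fun n => a (n * k ^ lam + r)) ∧
      ∀ w : List ℕ, SyncWord δ w → SyncWord δ' w := by
  by_cases hsub : ∀ s t : S, s = t
  · -- all states equal, so `a` is constant
    refine ⟨Unit, inferInstance, fun _ _ => (), (), fun _ => a r, ?_, ?_⟩
    · intro n
      have : a (n * k ^ lam + r) = a r := by
        rw [ha (n * k ^ lam + r), ha r]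
        exact congrArg out (hsub _ _)
      simpa using this
    · intro w _ s t; rfl
  · push_neg at hsub
    obtain ⟨x, y, hxy⟩ := hsub
    set e : S ≃ Fin (Fintype.card S) := Fintype.equivFin S with he
    set T := Fin (Fintype.card S)
    set δT : T → ℕ → T := fun t d => e (δ (e.symm t) d) with hδT
    have hcomm : ∀ s d, δT (e s) d = e (δ s d) := by
      intro s d; simp [hδT]
    refine ⟨Option T, inferInstance,
      fun o d => some (δT (o.getD (e s₀)) d), none,
      fun o => o.elim (a r) (fun t => out (e.symm (Gfold δT k lam r t))), ?_, ?_⟩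
    · intro n
      rcases Nat.eq_zero_or_pos n with hn | hn
      · subst hn
        simp [ha r]
      · have hne : Nat.digits k n ≠ [] := by
          rw [Nat.digits_ne_nil_iff_ne_zero]; omega
        obtain ⟨d, l, hdl⟩ : ∃ d l, (Nat.digits k n).reverse = d :: l := by
          rcases hrev : (Nat.digits k n).reverse with _ | ⟨d, l⟩
          · exact absurd (by simpa using congrArg List.reverse hrev) hne
          · exact ⟨d, l, rfl⟩
        have hfold : (Nat.digits k n).reverse.foldl
            (fun (o : Option T) d => some (δT (o.getD (e s₀)) d)) none
            = some ((Nat.digits k n).reverse.foldl δT (e s₀)) := by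
          rw [hdl]
          simp only [List.foldl_cons, Option.getD_none]
          exact foldl_opt δT (e s₀) l (δT (e s₀) d)
        simp only [ha (n * k ^ lam + r), hfold]
        rw [key_fold δ k hk lam r n s₀ hr hn]
        simp only [Option.elim]
        rw [foldl_comm δ δT e hcomm, Gfold_comm δ δT e hcomm, Equiv.symm_apply_apply]
    · intro w hw
      have hwne : w ≠ [] := by
        intro h
        subst h
        exact hxy (hw x y)
      obtain ⟨d, l, rfl⟩ := List.exists_cons_of_ne_nil hwne
      have hwT : SyncWord δT (d :: l) := by
        intro s t
        have h1 := foldl_comm δ δT e hcomm (d :: l) (e.symm s)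
        have h2 := foldl_comm δ δT e hcomm (d :: l) (e.symm t)
        simp only [Equiv.apply_symm_apply] at h1 h2
        rw [h1, h2, hw]
      intro o₁ o₂
      simp only [List.foldl_cons, foldl_opt]
      have := hwT (o₁.getD (e s₀)) (o₂.getD (e s₀))
      simp only [List.foldl_cons] at this
      rw [this]
end

section
/- Let c > 1 be a non-integer and d = ⌊c⌋. For every integer m ≥ 1 and every H ≥ 1, the number of distinct words ((⌊P^{(n)}(0)⌋ mod m), …, (⌊P^{(n)}(H−1)⌋ mod m)) over all n ≥ 0, where P^{(n)}(h) = Σ_{t=0}^{d} binom(c,t) n^{c−t} h^t is the degree-d Taylor polynomial of (n+h)^c, is at most O_d(m^{d+1} H^{(d+1)(d+2)}). -/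
open Module

/-- Generalized binomial coefficient `binom(c,t) = c(c-1)⋯(c-t+1)/t!`. -/
noncomputable def gbinom (c : ℝ) (t : ℕ) : ℝ :=
  (∏ i ∈ Finset.range t, (c - i)) / (Nat.factorial t)

/-- An affine map from a linear functional and a constant. -/
noncomputable def affL {V : Type} [AddCommGroup V] [Module ℝ V] (co : V →ₗ[ℝ] ℝ) (b : ℝ) :
    V →ᵃ[ℝ] ℝ :=
  ⟨fun x => co x + b, co, fun p v => by
    simp only [vadd_eq_add, map_add]
    ring⟩

@[simp] lemma affL_apply {V : Type} [AddCommGroup V] [Module ℝ V] (co : V →ₗ[ℝ] ℝ) (b : ℝ)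
    (x : V) : affL co b x = co x + b := rfl



lemma core {V : Type} [AddCommGroup V] [Module ℝ V] [FiniteDimensional ℝ V] (N : ℕ) (L : Fin N → (V →ᵃ[ℝ] ℝ)) (S : AffineSubspace ℝ V) (D : ℕ)
    (hS : Module.finrank ℝ S.direction ≤ D) :
    Set.ncard {p : Fin N → Bool | ∃ x ∈ S, ∀ i, p i = decide (0 ≤ L i x)} ≤ (N + 1) ^ D := by
  induction N generalizing S D with
  | zero =>
    have hsub : {p : Fin 0 → Bool | ∃ x ∈ S, ∀ i, p i = decide (0 ≤ L i x)} ⊆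
        {fun i => i.elim0} := by
      intro p _
      simp only [Set.mem_singleton_iff]
      funext i; exact i.elim0
    calc Set.ncard _ ≤ Set.ncard {fun i : Fin 0 => i.elim0} :=
          Set.ncard_le_ncard hsub (Set.finite_singleton _)
      _ = 1 := Set.ncard_singleton _
      _ ≤ (0 + 1) ^ D := by simp
  | succ N ih =>
    set f := L (Fin.last N) with hf
    set L' : Fin N → (V →ᵃ[ℝ] ℝ) := fun i => L i.castSucc with hL'
    set A := {p : Fin (N+1) → Bool | ∃ x ∈ S, ∀ i, p i = decide (0 ≤ L i x)} with hA
    set B := {p : Fin N → Bool | ∃ x ∈ S, ∀ i, p i = decide (0 ≤ L' i x)} with hB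
    have hBcard : B.ncard ≤ (N + 1) ^ D := ih L' S D hS
    by_cases hconst : ∀ x ∈ S, ∀ y ∈ S, f x = f y
    · -- f is constant on S
      have hinj : Set.InjOn (fun p : Fin (N+1) → Bool => Fin.init p) A := by
        rintro p ⟨x, hx, hpx⟩ q ⟨y, hy, hqy⟩ hpq
        funext i
        refine Fin.lastCases ?_ (fun j => ?_) i
        · rw [hpx, hqy, hconst x hx y hy]
        · exact congrFun hpq j
      have hmaps : ∀ p ∈ A, Fin.init p ∈ B := by
        rintro p ⟨x, hx, hpx⟩
        exact ⟨x, hx, fun i => hpx i.castSucc⟩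
      calc A.ncard ≤ B.ncard :=
            Set.ncard_le_ncard_of_injOn _ hmaps hinj (Set.toFinite _)
        _ ≤ (N + 1) ^ D := hBcard
        _ ≤ (N + 1 + 1) ^ D := Nat.pow_le_pow_left (by omega) D
    · push_neg at hconst
      obtain ⟨x0, hx0, y0, hy0, hne⟩ := hconst
      have hv : (x0 -ᵥ y0) ∈ S.direction := AffineSubspace.vsub_mem_direction hx0 hy0
      have hlv : f.linear (x0 -ᵥ y0) ≠ 0 := by
        rw [AffineMap.linearMap_vsub]
        simpa [sub_eq_zero] using hne
      have hDpos : 1 ≤ D := by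
        rcases Nat.eq_zero_or_pos D with h0 | h
        · exfalso
          have hz : Module.finrank ℝ S.direction = 0 := by omega
          have hbot : S.direction = ⊥ := Submodule.finrank_eq_zero.mp hz
          rw [hbot, Submodule.mem_bot] at hv
          rw [hv, map_zero] at hlv
          exact hlv rfl
        · exact h
      obtain ⟨D', rfl⟩ : ∃ D', D = D' + 1 := ⟨D - 1, by omega⟩
      set S' : AffineSubspace ℝ V := S ⊓ AffineSubspace.comap f (AffineSubspace.mk' (0:ℝ) ⊥)
        with hS'
      have hS'mem : ∀ z, z ∈ S' ↔ z ∈ S ∧ f z = 0 := by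
        intro z
        rw [hS', AffineSubspace.mem_inf_iff, AffineSubspace.mem_comap,
          AffineSubspace.mem_mk']
        simp [sub_eq_zero]
      have hdir : Module.finrank ℝ S'.direction ≤ D' := by
        rcases Set.eq_empty_or_nonempty (S' : Set V) with he | ⟨z0, hz0⟩
        · rw [(S'.coe_eq_bot_iff).mp he, AffineSubspace.direction_bot]
          simp
        · have hle : S'.direction ≤ S.direction ⊓ LinearMap.ker f.linear := by
            intro v hv'
            rw [AffineSubspace.mem_direction_iff_eq_vsub ⟨z0, hz0⟩] at hv'
            obtain ⟨p, hp, q, hq, rfl⟩ := hv'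
            have hp' := (hS'mem p).mp hp
            have hq' := (hS'mem q).mp hq
            refine Submodule.mem_inf.mpr ⟨AffineSubspace.vsub_mem_direction hp'.1 hq'.1, ?_⟩
            rw [LinearMap.mem_ker, AffineMap.linearMap_vsub, hp'.2, hq'.2]
            simp
          have hlt : (S.direction ⊓ LinearMap.ker f.linear) < S.direction := by
            refine lt_of_le_of_ne inf_le_left fun hEq => ?_
            rw [← hEq] at hv
            exact hlv (Submodule.mem_inf.mp hv).2
          have h1 := Submodule.finrank_lt_finrank_of_lt hlt
          have h2 := Submodule.finrank_mono hle
          omega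
      set B' := {p : Fin N → Bool | ∃ x ∈ S', ∀ i, p i = decide (0 ≤ L' i x)} with hB'
      have hB'card : B'.ncard ≤ (N + 1) ^ D' := ih L' S' D' hdir
      set r : (Fin (N+1) → Bool) → (Fin N → Bool) := Fin.init with hr
      set At := {p ∈ A | p (Fin.last N) = true} with hAt
      set Af := {p ∈ A | p (Fin.last N) = false} with hAf
      have hApart : A = At ∪ Af := by
        ext p
        constructor
        · intro hp
          rcases Bool.eq_false_or_eq_true (p (Fin.last N)) with hb | hb
          · first
              | exact Or.inl ⟨hp, hb⟩
              | exact Or.inr ⟨hp, hb⟩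
          · first
              | exact Or.inl ⟨hp, hb⟩
              | exact Or.inr ⟨hp, hb⟩
        · rintro (⟨hp, _⟩ | ⟨hp, _⟩) <;> exact hp
      have hsplit : A.ncard = At.ncard + Af.ncard := by
        rw [hApart]
        exact Set.ncard_union_eq (by
          rw [Set.disjoint_left]
          rintro p ⟨_, h1⟩ ⟨_, h2⟩
          rw [h1] at h2; exact Bool.noConfusion h2) (Set.toFinite _) (Set.toFinite _)
      have hinj : ∀ b : Bool, Set.InjOn r {p ∈ A | p (Fin.last N) = b} := by
        intro b p ⟨_, hp⟩ q ⟨_, hq⟩ hpq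
        funext i
        refine Fin.lastCases ?_ (fun j => ?_) i
        · rw [hp, hq]
        · exact congrFun hpq j
      have hmaps : ∀ b : Bool, r '' {p ∈ A | p (Fin.last N) = b} ⊆ B := by
        rintro b τ ⟨p, ⟨⟨x, hx, hpx⟩, _⟩, rfl⟩
        exact ⟨x, hx, fun i => hpx i.castSucc⟩
      have hkey : (r '' At) ∩ (r '' Af) ⊆ B' := by
        rintro τ ⟨⟨p, ⟨⟨x, hx, hpx⟩, hpl⟩, rfl⟩, ⟨q, ⟨⟨y, hy, hqy⟩, hql⟩, hqτ⟩⟩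
        have hfx : 0 ≤ f x := by
          have := (hpx (Fin.last N)).symm
          rw [hpl] at this
          exact of_decide_eq_true this
        have hfy : f y < 0 := by
          have := (hqy (Fin.last N)).symm
          rw [hql] at this
          exact lt_of_not_ge (of_decide_eq_false this)
        have hab : ∀ i : Fin N, decide (0 ≤ L' i x) = decide (0 ≤ L' i y) := by
          intro i
          have h1 := hpx i.castSucc
          have h2 := hqy i.castSucc
          have h3 : q i.castSucc = p i.castSucc := congrFun hqτ i
          rw [← h1, ← h2, h3]
        by_cases hfx0 : f x = 0
        · refine ⟨x, (hS'mem x).mpr ⟨hx, hfx0⟩, fun i => hpx i.castSucc⟩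
        · have hfxpos : 0 < f x := lt_of_le_of_ne hfx (Ne.symm hfx0)
          have hden : f y - f x < 0 := by linarith
          obtain ⟨t, ht⟩ : ∃ t : ℝ, t = f y / (f y - f x) := ⟨_, rfl⟩
          have hteq : t * (f y - f x) = f y := by
            rw [ht, div_mul_cancel₀ _ (ne_of_lt hden)]
          have ht0 : 0 ≤ t := by
            by_contra hcon
            push_neg at hcon
            have := mul_pos_of_neg_of_neg hcon hden
            rw [hteq] at this
            linarith
          have ht1 : t ≤ 1 := by
            by_contra hcon
            push_neg at hcon
            have := mul_lt_mul_of_neg_right hcon hden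
            rw [hteq, one_mul] at this
            linarith
          obtain ⟨z, hz⟩ : ∃ z : V, z = t • (x -ᵥ y) +ᵥ y := ⟨_, rfl⟩
          have hzS : z ∈ S := by rw [hz]; exact S.smul_vsub_vadd_mem t hx hy hy
          have heval : ∀ g : V →ᵃ[ℝ] ℝ, g z = t * (g x - g y) + g y := by
            intro g
            rw [hz, AffineMap.map_vadd, LinearMap.map_smul, AffineMap.linearMap_vsub]
            simp [smul_eq_mul]
          have hfz : f z = 0 := by
            rw [heval f]
            have hrw : t * (f x - f y) = -(t * (f y - f x)) := by ring
            rw [hrw, hteq]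
            ring
          refine ⟨z, (hS'mem z).mpr ⟨hzS, hfz⟩, fun i => ?_⟩
          have h1 := hpx i.castSucc
          have habi := hab i
          show p i.castSucc = decide (0 ≤ L' i z)
          rw [heval (L' i)]
          by_cases hax : 0 ≤ L' i x
          · have hay : 0 ≤ L' i y := by
              have : decide (0 ≤ L' i y) = true := by rw [← habi]; exact decide_eq_true hax
              exact of_decide_eq_true this
            have hpos : 0 ≤ t * (L' i x - L' i y) + L' i y := by
              have hid : t * (L' i x - L' i y) + L' i y
                  = t * (L' i x) + (1 - t) * (L' i y) := by ring
              rw [hid]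
              have h1 : 0 ≤ t * (L' i x) := mul_nonneg ht0 hax
              have h2 : 0 ≤ (1 - t) * (L' i y) := mul_nonneg (by linarith) hay
              linarith
            rw [h1, decide_eq_true hax, decide_eq_true hpos]
          · have hay : ¬ (0 ≤ L' i y) := by
              have : decide (0 ≤ L' i y) = false := by
                rw [← habi]; exact decide_eq_false hax
              exact of_decide_eq_false this
            have hneg : ¬ (0 ≤ t * (L' i x - L' i y) + L' i y) := by
              push_neg at hax hay ⊢
              have hid : t * (L' i x - L' i y) + L' i y
                  = t * (L' i x) + (1 - t) * (L' i y) := by ring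
              rw [hid]
              rcases eq_or_lt_of_le ht0 with h0 | h0
              · rw [← h0]
                simpa using hay
              · have h1 : t * (L' i x) < 0 := mul_neg_of_pos_of_neg h0 hax
                have h2 : (1 - t) * (L' i y) ≤ 0 :=
                  mul_nonpos_of_nonneg_of_nonpos (by linarith) (le_of_lt hay)
                linarith
            rw [h1, decide_eq_false hax, decide_eq_false hneg]
      have himg : At.ncard = (r '' At).ncard := (Set.ncard_image_of_injOn (hinj true)).symm
      have himg' : Af.ncard = (r '' Af).ncard := (Set.ncard_image_of_injOn (hinj false)).symm
      have huai : ((r '' At) ∪ (r '' Af)).ncard + ((r '' At) ∩ (r '' Af)).ncard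
          = (r '' At).ncard + (r '' Af).ncard :=
        Set.ncard_union_add_ncard_inter _ _ (Set.toFinite _) (Set.toFinite _)
      have hu : ((r '' At) ∪ (r '' Af)).ncard ≤ B.ncard := by
        refine Set.ncard_le_ncard ?_ (Set.toFinite _)
        rw [Set.union_subset_iff]
        exact ⟨hmaps true, hmaps false⟩
      have hi : ((r '' At) ∩ (r '' Af)).ncard ≤ B'.ncard :=
        Set.ncard_le_ncard hkey (Set.toFinite _)
      have hfinal : A.ncard ≤ B.ncard + B'.ncard := by omega
      calc A.ncard ≤ B.ncard + B'.ncard := hfinal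
        _ ≤ (N + 1) ^ (D' + 1) + (N + 1) ^ D' := Nat.add_le_add hBcard hB'card
        _ ≤ (N + 1 + 1) ^ (D' + 1) := by
            have h1 : (N + 1) ^ (D' + 1) + (N + 1) ^ D' = (N + 1) ^ D' * (N + 2) := by ring
            have h2 : (N + 1) ^ D' * (N + 2) ≤ (N + 2) ^ D' * (N + 2) :=
              Nat.mul_le_mul_right _ (Nat.pow_le_pow_left (by omega) _)
            have h3 : (N + 2) ^ D' * (N + 2) = (N + 1 + 1) ^ (D' + 1) := by ring
            omega

lemma corefin {ι : Type} [Fintype ι] {V : Type} [AddCommGroup V] [Module ℝ V]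
    [FiniteDimensional ℝ V]
    (L : ι → (V →ᵃ[ℝ] ℝ)) (S : AffineSubspace ℝ V) (D : ℕ)
    (hS : Module.finrank ℝ S.direction ≤ D) :
    Set.ncard {p : ι → Bool | ∃ x ∈ S, ∀ i, p i = decide (0 ≤ L i x)}
      ≤ (Fintype.card ι + 1) ^ D := by
  set e := (Fintype.equivFin ι).symm with he
  have hmaps : ∀ p ∈ {p : ι → Bool | ∃ x ∈ S, ∀ i, p i = decide (0 ≤ L i x)},
      (p ∘ e) ∈ {p : Fin (Fintype.card ι) → Bool |
        ∃ x ∈ S, ∀ j, p j = decide (0 ≤ (L ∘ e) j x)} := by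
    rintro p ⟨x, hx, hp⟩
    exact ⟨x, hx, fun j => hp (e j)⟩
  have hinj : Set.InjOn (fun p : ι → Bool => p ∘ e)
      {p : ι → Bool | ∃ x ∈ S, ∀ i, p i = decide (0 ≤ L i x)} := by
    intro p _ q _ hpq
    funext i
    have h1 := congrFun hpq (e.symm i)
    simpa using h1
  calc Set.ncard {p : ι → Bool | ∃ x ∈ S, ∀ i, p i = decide (0 ≤ L i x)}
      ≤ Set.ncard {p : Fin (Fintype.card ι) → Bool |
          ∃ x ∈ S, ∀ j, p j = decide (0 ≤ (L ∘ e) j x)} :=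
        Set.ncard_le_ncard_of_injOn _ hmaps hinj (Set.toFinite _)
    _ ≤ (Fintype.card ι + 1) ^ D := core (Fintype.card ι) (L ∘ e) S D hS

lemma hnat_aux (d m H : ℕ) (hm : 1 ≤ m) (hH : 1 ≤ H) :
    (H * (m * (d + 1) * H ^ d + 1) + 1) ^ (d + 1)
      ≤ (3 * (d + 1)) ^ (d + 1) * m ^ (d + 1) * H ^ ((d + 1) * (d + 2)) := by
  have hb : H * (m * (d + 1) * H ^ d + 1) + 1 ≤ 3 * (d + 1) * m * H ^ (d + 1) := by
    have e1 : H * (m * (d + 1) * H ^ d + 1) + 1 = m * (d + 1) * H ^ (d + 1) + (H + 1) := by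
      ring
    have e2 : H + 1 ≤ 2 * H ^ (d + 1) := by
      have h1 : H ≤ H ^ (d + 1) := Nat.le_self_pow (by omega) _
      have h2 : 1 ≤ H ^ (d + 1) := Nat.one_le_pow _ _ (by omega)
      omega
    have e3 : 2 * H ^ (d + 1) ≤ 2 * (m * (d + 1)) * H ^ (d + 1) := by
      have h4 : 1 ≤ m * (d + 1) := Nat.one_le_iff_ne_zero.mpr (by positivity)
      nlinarith
    calc H * (m * (d + 1) * H ^ d + 1) + 1 = m * (d + 1) * H ^ (d + 1) + (H + 1) := e1
      _ ≤ m * (d + 1) * H ^ (d + 1) + 2 * (m * (d + 1)) * H ^ (d + 1) := by omega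
      _ = 3 * (d + 1) * m * H ^ (d + 1) := by ring
  calc (H * (m * (d + 1) * H ^ d + 1) + 1) ^ (d + 1)
      ≤ (3 * (d + 1) * m * H ^ (d + 1)) ^ (d + 1) := Nat.pow_le_pow_left hb _
    _ = (3 * (d + 1)) ^ (d + 1) * m ^ (d + 1) * H ^ ((d + 1) * (d + 1)) := by
        rw [mul_pow, mul_pow, ← pow_mul]
    _ ≤ (3 * (d + 1)) ^ (d + 1) * m ^ (d + 1) * H ^ ((d + 1) * (d + 2)) := by
        refine Nat.mul_le_mul_left _ (Nat.pow_le_pow_right (by omega) ?_)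
        nlinarith

lemma words_bound (d m H : ℕ) (hm : 1 ≤ m) (hH : 1 ≤ H) (A : ℕ → Fin (d + 1) → ℝ) :
    Set.ncard {w : Fin H → ℤ | ∃ n : ℕ, ∀ h : Fin H,
        w h = ⌊∑ t : Fin (d + 1), A n t * ((h : ℕ) : ℝ) ^ (t : ℕ)⌋ % (m : ℤ)}
      ≤ (3 * (d + 1)) ^ (d + 1) * m ^ (d + 1) * H ^ ((d + 1) * (d + 2)) := by
  set M : ℕ := m * (d + 1) * H ^ d with hM
  set co : Fin H → ((Fin (d + 1) → ℝ) →ₗ[ℝ] ℝ) := fun h =>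
    ∑ t : Fin (d + 1), ((((h : ℕ) : ℝ)) ^ (t : ℕ) * m) • LinearMap.proj t with hco
  set L : Fin H × Fin (M + 1) → ((Fin (d + 1) → ℝ) →ᵃ[ℝ] ℝ) := fun hk =>
    affL (co hk.1) (-((hk.2 : ℕ) : ℝ)) with hL
  have hLeval : ∀ hk (x : Fin (d + 1) → ℝ),
      L hk x = (∑ t : Fin (d + 1), x t * (((hk.1 : ℕ) : ℝ)) ^ (t : ℕ)) * (m : ℝ)
        - ((hk.2 : ℕ) : ℝ) := by
    intro hk x
    rw [hL]
    simp only [affL_apply, hco, LinearMap.sum_apply, LinearMap.smul_apply,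
      LinearMap.proj_apply, smul_eq_mul, Finset.sum_mul]
    rw [sub_eq_add_neg]
    congr 1
    exact Finset.sum_congr rfl fun t _ => by ring
  set P := {p : Fin H × Fin (M + 1) → Bool |
      ∃ x ∈ (⊤ : AffineSubspace ℝ (Fin (d + 1) → ℝ)), ∀ i, p i = decide (0 ≤ L i x)} with hP
  have hPcard : P.ncard ≤ (Fintype.card (Fin H × Fin (M + 1)) + 1) ^ (d + 1) := by
    refine corefin L ⊤ (d + 1) ?_
    rw [AffineSubspace.direction_top, finrank_top, Module.finrank_pi]
    simp
  set Recon : (Fin H × Fin (M + 1) → Bool) → (Fin H → ℤ) := fun p h =>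
    (∑ k : Fin (M + 1), if 1 ≤ (k : ℕ) ∧ p (h, k) = true then (1 : ℤ) else 0) % m
    with hRecon
  have hsub : {w : Fin H → ℤ | ∃ n : ℕ, ∀ h : Fin H,
        w h = ⌊∑ t : Fin (d + 1), A n t * ((h : ℕ) : ℝ) ^ (t : ℕ)⌋ % (m : ℤ)}
      ⊆ Recon '' P := by
    rintro w ⟨n, hn⟩
    set x : Fin (d + 1) → ℝ := fun t => Int.fract (A n t / m) with hx
    refine ⟨fun i => decide (0 ≤ L i x), ⟨x, AffineSubspace.mem_top _ _ _, fun i => rfl⟩, ?_⟩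
    funext h
    set X : ℝ := ∑ t : Fin (d + 1), x t * ((h : ℕ) : ℝ) ^ (t : ℕ) with hX
    set z : ℤ := ∑ t : Fin (d + 1), ⌊A n t / m⌋ * ((h : ℕ) : ℤ) ^ (t : ℕ) with hz
    have claim1 : ∑ t : Fin (d + 1), A n t * ((h : ℕ) : ℝ) ^ (t : ℕ)
        = X * m + (z : ℝ) * m := by
      have e1 : ∀ t : Fin (d + 1), A n t * ((h : ℕ) : ℝ) ^ (t : ℕ)
          = (x t + (⌊A n t / m⌋ : ℝ)) * ((h : ℕ) : ℝ) ^ (t : ℕ) * m := by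
        intro t
        have hfr : x t + (⌊A n t / m⌋ : ℝ) = A n t / m := Int.fract_add_floor _
        rw [hfr]
        have hm0 : (m : ℝ) ≠ 0 := by positivity
        field_simp
      rw [Finset.sum_congr rfl fun t _ => e1 t, hX, hz]
      push_cast
      rw [Finset.sum_mul, Finset.sum_mul, ← Finset.sum_add_distrib]
      exact Finset.sum_congr rfl fun t _ => by ring
    have claim2 : ⌊∑ t : Fin (d + 1), A n t * ((h : ℕ) : ℝ) ^ (t : ℕ)⌋
        = ⌊X * m⌋ + m * z := by
      rw [claim1]
      have e2 : (z : ℝ) * m = ((m * z : ℤ) : ℝ) := by push_cast; ring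
      rw [e2, Int.floor_add_intCast]
    have claim3 : w h = ⌊X * m⌋ % m := by
      rw [hn h, claim2, Int.add_mul_emod_self_left]
    have hXnonneg : 0 ≤ X :=
      Finset.sum_nonneg fun t _ => mul_nonneg (Int.fract_nonneg _) (by positivity)
    have hXle : X ≤ ((d : ℝ) + 1) * (H : ℝ) ^ d := by
      rw [hX]
      have hbd : ∀ t : Fin (d + 1), x t * ((h : ℕ) : ℝ) ^ (t : ℕ) ≤ (H : ℝ) ^ d := by
        intro t
        have h1 : x t ≤ 1 := le_of_lt (Int.fract_lt_one _)
        have hh : ((h : ℕ) : ℝ) ≤ (H : ℝ) := by exact_mod_cast le_of_lt h.isLt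
        have h2 : ((h : ℕ) : ℝ) ^ (t : ℕ) ≤ (H : ℝ) ^ d :=
          calc ((h : ℕ) : ℝ) ^ (t : ℕ) ≤ (H : ℝ) ^ (t : ℕ) :=
                pow_le_pow_left₀ (by positivity) hh _
            _ ≤ (H : ℝ) ^ d :=
                pow_le_pow_right₀ (by exact_mod_cast hH) (by omega)
        have h3 : (0 : ℝ) ≤ ((h : ℕ) : ℝ) ^ (t : ℕ) := by positivity
        calc x t * ((h : ℕ) : ℝ) ^ (t : ℕ) ≤ 1 * ((h : ℕ) : ℝ) ^ (t : ℕ) :=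
              mul_le_mul_of_nonneg_right h1 h3
          _ = ((h : ℕ) : ℝ) ^ (t : ℕ) := one_mul _
          _ ≤ (H : ℝ) ^ d := h2
      calc (∑ t : Fin (d + 1), x t * ((h : ℕ) : ℝ) ^ (t : ℕ))
          ≤ ∑ _t : Fin (d + 1), (H : ℝ) ^ d := Finset.sum_le_sum fun t _ => hbd t
        _ = ((d : ℝ) + 1) * (H : ℝ) ^ d := by
            rw [Finset.sum_const, Finset.card_univ, Fintype.card_fin, nsmul_eq_mul]
            push_cast; ring
    have hXmle : X * m ≤ (M : ℝ) := by
      rw [hM]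
      push_cast
      calc X * (m : ℝ) ≤ (((d : ℝ) + 1) * (H : ℝ) ^ d) * m :=
            mul_le_mul_of_nonneg_right hXle (by positivity)
        _ = (m : ℝ) * ((d : ℝ) + 1) * (H : ℝ) ^ d := by ring
    have hF0nonneg : 0 ≤ ⌊X * m⌋ := Int.floor_nonneg.mpr (by positivity)
    have hF0le : ⌊X * m⌋ ≤ (M : ℤ) := by
      have h5 := Int.floor_le_floor (R := ℝ) hXmle
      rwa [Int.floor_natCast] at h5
    have claim4 : (∑ k : Fin (M + 1),
        if 1 ≤ (k : ℕ) ∧ decide (0 ≤ L (h, k) x) = true then (1 : ℤ) else 0)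
          = ⌊X * m⌋ := by
      have hcond : ∀ k : Fin (M + 1),
          (1 ≤ (k : ℕ) ∧ decide (0 ≤ L (h, k) x) = true) ↔
            (1 ≤ (k : ℕ) ∧ (k : ℕ) ≤ (⌊X * m⌋).toNat) := by
        intro k
        constructor
        · rintro ⟨h1, h2⟩
          refine ⟨h1, ?_⟩
          have h3 : (0 : ℝ) ≤ L (h, k) x := of_decide_eq_true h2
          rw [hLeval, ← hX] at h3
          have h4 : ((k : ℕ) : ℝ) ≤ X * m := by linarith
          have h5 : ((k : ℕ) : ℤ) ≤ ⌊X * m⌋ := Int.le_floor.mpr (by push_cast; exact h4)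
          omega
        · rintro ⟨h1, h2⟩
          refine ⟨h1, ?_⟩
          have h5 : ((k : ℕ) : ℤ) ≤ ⌊X * m⌋ := by omega
          have h4 : ((k : ℕ) : ℝ) ≤ X * m := by
            have h6 := Int.le_floor.mp h5
            push_cast at h6 ⊢
            linarith
          refine decide_eq_true ?_
          rw [hLeval, ← hX]
          linarith
      rw [Finset.sum_congr rfl fun k _ => by rw [if_congr (hcond k) rfl rfl]]
      have hsum : (∑ k : Fin (M + 1),
          if 1 ≤ (k : ℕ) ∧ (k : ℕ) ≤ (⌊X * m⌋).toNat then (1 : ℤ) else 0)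
          = ∑ k ∈ Finset.range (M + 1),
            if 1 ≤ k ∧ k ≤ (⌊X * m⌋).toNat then (1 : ℤ) else 0 :=
        Fin.sum_univ_eq_sum_range
          (fun k => if 1 ≤ k ∧ k ≤ (⌊X * m⌋).toNat then (1 : ℤ) else 0) _
      rw [hsum, Finset.sum_boole]
      have hfil : (Finset.range (M + 1)).filter
          (fun k => 1 ≤ k ∧ k ≤ (⌊X * m⌋).toNat) = Finset.Icc 1 (⌊X * m⌋).toNat := by
        ext k
        simp only [Finset.mem_filter, Finset.mem_range, Finset.mem_Icc]
        omega
      rw [hfil, Nat.card_Icc]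
      omega
    rw [hRecon]
    simp only
    rw [claim4, claim3]
  have hPfin : P.Finite := Set.toFinite _
  have hn1 : Set.ncard {w : Fin H → ℤ | ∃ n : ℕ, ∀ h : Fin H,
        w h = ⌊∑ t : Fin (d + 1), A n t * ((h : ℕ) : ℝ) ^ (t : ℕ)⌋ % (m : ℤ)}
      ≤ P.ncard :=
    calc _ ≤ (Recon '' P).ncard := Set.ncard_le_ncard hsub (hPfin.image _)
      _ ≤ P.ncard := Set.ncard_image_le hPfin
  have hcard : Fintype.card (Fin H × Fin (M + 1)) = H * (M + 1) := by simp
  have hnat : (H * (M + 1) + 1) ^ (d + 1)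
      ≤ (3 * (d + 1)) ^ (d + 1) * m ^ (d + 1) * H ^ ((d + 1) * (d + 2)) := by
    rw [hM]
    exact hnat_aux d m H hm hH
  calc Set.ncard {w : Fin H → ℤ | ∃ n : ℕ, ∀ h : Fin H,
        w h = ⌊∑ t : Fin (d + 1), A n t * ((h : ℕ) : ℝ) ^ (t : ℕ)⌋ % (m : ℤ)}
      ≤ P.ncard := hn1
    _ ≤ (Fintype.card (Fin H × Fin (M + 1)) + 1) ^ (d + 1) := hPcard
    _ = (H * (M + 1) + 1) ^ (d + 1) := by rw [hcard]
    _ ≤ _ := hnat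

theorem stmt_19 (d : ℕ) (hd : 1 ≤ d) :
    ∃ C > (0 : ℝ), ∀ c : ℝ, 1 < c → (∀ z : ℤ, c ≠ z) → (d : ℤ) = ⌊c⌋ →
      ∀ m H : ℕ, 1 ≤ m → 1 ≤ H →
        (Set.ncard {w : Fin H → ℤ | ∃ n : ℕ, ∀ h : Fin H,
            w h = ⌊∑ t ∈ Finset.range (d + 1),
                gbinom c t * (n : ℝ) ^ (c - t) * ((h : ℕ) : ℝ) ^ t⌋ % (m : ℤ)} : ℝ) ≤
          C * (m : ℝ) ^ (d + 1) * (H : ℝ) ^ ((d + 1) * (d + 2)) := by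
  refine ⟨(((3 * (d + 1)) ^ (d + 1) : ℕ) : ℝ), by positivity, ?_⟩
  intro c _ _ _ m H hm hH
  have hsets : {w : Fin H → ℤ | ∃ n : ℕ, ∀ h : Fin H,
        w h = ⌊∑ t ∈ Finset.range (d + 1),
            gbinom c t * (n : ℝ) ^ (c - t) * ((h : ℕ) : ℝ) ^ t⌋ % (m : ℤ)}
      = {w : Fin H → ℤ | ∃ n : ℕ, ∀ h : Fin H,
        w h = ⌊∑ t : Fin (d + 1),
            (fun (n : ℕ) (t : Fin (d + 1)) => gbinom c t * (n : ℝ) ^ (c - (t : ℕ))) n t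
              * ((h : ℕ) : ℝ) ^ (t : ℕ)⌋ % (m : ℤ)} := by
    ext w
    constructor <;> rintro ⟨n, hn⟩ <;> refine ⟨n, fun h => ?_⟩ <;> rw [hn h] <;>
      rw [← Fin.sum_univ_eq_sum_range
        (fun t => gbinom c t * (n : ℝ) ^ (c - t) * ((h : ℕ) : ℝ) ^ t) (d + 1)]
  rw [hsets]
  have hb := words_bound d m H hm hH
    (fun (n : ℕ) (t : Fin (d + 1)) => gbinom c t * (n : ℝ) ^ (c - (t : ℕ)))
  calc (Set.ncard _ : ℝ)
      ≤ (((3 * (d + 1)) ^ (d + 1) * m ^ (d + 1) * H ^ ((d + 1) * (d + 2)) : ℕ) : ℝ) := by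
        exact_mod_cast hb
    _ = (((3 * (d + 1)) ^ (d + 1) : ℕ) : ℝ) * (m : ℝ) ^ (d + 1)
        * (H : ℝ) ^ ((d + 1) * (d + 2)) := by push_cast; ring
end
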